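/- arXiv:1501.06484 — 2 statements merged into one kernel-verified Lean document; each statement's English description precedes it below -/
import Mathlib

section
/- In a parity game with injective colouring, the preference order ⊏ on valuation triples (c, C, d) — defined by comparing first the dominant colour under the parity order, then the symmetric difference of the colour sets by the parity of its maximum, then the first-occurrence index (smaller better if c even, larger better if c odd) — is a strict linear order on triples with c ∈ ℕ, C a finite set of naturals with all elements > c, and d ∈ ℕ. -/
/-- The parity preference order on colours. -/
def parityLt (c c' : ℕ) : Prop :=
  (Odd c ∧ Even c') ∨ (Even c ∧ Even c' ∧ c < c') ∨ (Odd c ∧ Odd c' ∧ c' < c)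

/-- `h` is the maximum of the finite set `A`. -/
def isMaxOf (A : Finset ℕ) (h : ℕ) : Prop := h ∈ A ∧ ∀ x ∈ A, x ≤ h

/-- The preference order on valuation triples `(c, C, d)`: compare first the
dominant colour under the parity order, then the symmetric difference of the
colour sets by the parity of its maximum, then the first-occurrence index. -/
def tripLt : ℕ × Finset ℕ × ℕ → ℕ × Finset ℕ × ℕ → Prop
  | (c', C', d'), (c, C, d) =>
      parityLt c' c ∨
      (c' = c ∧ ∃ h : ℕ, isMaxOf (symmDiff C C') h ∧ Even h ∧ h ∈ C) ∨
      (c' = c ∧ ∃ h : ℕ, isMaxOf (symmDiff C C') h ∧ Odd h ∧ h ∈ C') ∨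
      (c' = c ∧ C' = C ∧ Even c ∧ d < d') ∨
      (c' = c ∧ C' = C ∧ Odd c ∧ d' < d)

/-- A valid valuation triple: all colours of the set exceed the dominant one. -/
def validTriple : ℕ × Finset ℕ × ℕ → Prop
  | (c, C, _) => ∀ x ∈ C, c < x


/-- signed weight of a colour -/
def term (x : ℕ) : ℤ := if Even x then 2 ^ x else -(2 ^ x)

/-- signed weight of a colour set -/
def w (C : Finset ℕ) : ℤ := ∑ x ∈ C, term x

lemma abs_term (x : ℕ) : |term x| = 2 ^ x := by
  unfold term
  split <;> simp [abs_of_nonneg, pow_nonneg]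

lemma geo (n : ℕ) : ∑ i ∈ Finset.range n, (2:ℤ) ^ i = 2 ^ n - 1 := by
  induction n with
  | zero => simp
  | succ n ih => rw [Finset.sum_range_succ, ih]; ring

lemma w_sub (C C' : Finset ℕ) :
    w C - w C' = ∑ x ∈ symmDiff C C', (if x ∈ C then term x else -term x) := by
  have h1 : symmDiff C C' = (C \ C') ∪ (C' \ C) := by
    ext x
    simp only [Finset.mem_symmDiff, Finset.mem_union, Finset.mem_sdiff]
  have hdisj : Disjoint (C \ C') (C' \ C) := disjoint_sdiff_sdiff
  rw [h1, Finset.sum_union hdisj]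
  have e1 : ∑ x ∈ C \ C', (if x ∈ C then term x else -term x) = ∑ x ∈ C \ C', term x := by
    apply Finset.sum_congr rfl
    intro x hx
    rw [if_pos (Finset.mem_sdiff.mp hx).1]
  have e2 : ∑ x ∈ C' \ C, (if x ∈ C then term x else -term x) = -∑ x ∈ C' \ C, term x := by
    rw [← Finset.sum_neg_distrib]
    apply Finset.sum_congr rfl
    intro x hx
    rw [if_neg (Finset.mem_sdiff.mp hx).2]
  rw [e1, e2]
  have h2 := Finset.sum_inter_add_sum_sdiff C C' term
  have h3 := Finset.sum_inter_add_sum_sdiff C' C term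
  have h4 : C ∩ C' = C' ∩ C := Finset.inter_comm _ _
  unfold w
  rw [← h2, ← h3, h4]
  ring

lemma setLt_iff (C C' : Finset ℕ) (h : ℕ) (hmax : isMaxOf (symmDiff C C') h) :
    ((Even h ∧ h ∈ C) ∨ (Odd h ∧ h ∈ C')) ↔ w C' < w C := by
  obtain ⟨hm, hub⟩ := hmax
  set u : ℕ → ℤ := fun x => if x ∈ C then term x else -term x with hu
  have key : w C - w C' = u h + ∑ x ∈ (symmDiff C C').erase h, u x := by
    rw [w_sub, ← Finset.add_sum_erase _ _ hm]
  have hE : |∑ x ∈ (symmDiff C C').erase h, u x| < 2 ^ h := by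
    calc |∑ x ∈ (symmDiff C C').erase h, u x| ≤ ∑ x ∈ (symmDiff C C').erase h, |u x| :=
          Finset.abs_sum_le_sum_abs _ _
      _ = ∑ x ∈ (symmDiff C C').erase h, (2:ℤ) ^ x := by
          apply Finset.sum_congr rfl
          intro x _
          simp only [hu]
          split <;> simp [abs_term, abs_neg]
      _ ≤ ∑ x ∈ Finset.range h, (2:ℤ) ^ x := by
          apply Finset.sum_le_sum_of_subset_of_nonneg
          · intro x hx
            rw [Finset.mem_range]
            exact lt_of_le_of_ne (hub x (Finset.mem_of_mem_erase hx)) (Finset.ne_of_mem_erase hx)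
          · intro i _ _; positivity
      _ = 2 ^ h - 1 := geo h
      _ < 2 ^ h := by linarith
  have hE' := abs_lt.mp hE
  have hpow : (0:ℤ) < 2 ^ h := by positivity
  rcases Nat.even_or_odd h with hpar | hpar <;>
    rcases Finset.mem_symmDiff.mp hm with ⟨h1, h2⟩ | ⟨h1, h2⟩
  · have huh : u h = 2 ^ h := by simp [hu, h1, term, hpar]
    constructor
    · intro _; linarith [key, hE'.1]
    · intro _; exact Or.inl ⟨hpar, h1⟩
  · have huh : u h = -(2 ^ h) := by simp [hu, h2, term, hpar]
    constructor
    · rintro (⟨_, hc⟩ | ⟨ho, _⟩)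
      · exact absurd hc h2
      · exact absurd hpar (Nat.not_even_iff_odd.mpr ho)
    · intro hlt; exfalso; linarith [key, hE'.2]
  · have huh : u h = -(2 ^ h) := by
      simp [hu, h1, term, Nat.not_even_iff_odd.mpr hpar]
    constructor
    · rintro (⟨he, _⟩ | ⟨_, hc⟩)
      · exact absurd he (Nat.not_even_iff_odd.mpr hpar)
      · exact absurd hc h2
    · intro hlt; exfalso; linarith [key, hE'.2]
  · have huh : u h = 2 ^ h := by
      simp [hu, h2, term, Nat.not_even_iff_odd.mpr hpar]
    constructor
    · intro _; linarith [key, hE'.1]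
    · intro _; exact Or.inr ⟨hpar, h1⟩

lemma exists_max (C C' : Finset ℕ) (hne : C ≠ C') : ∃ h, isMaxOf (symmDiff C C') h := by
  have hne' : (symmDiff C C').Nonempty := by
    rw [Finset.nonempty_iff_ne_empty]
    intro hc
    exact hne (symmDiff_eq_bot.mp hc)
  exact ⟨(symmDiff C C').max' hne', (symmDiff C C').max'_mem hne',
    fun x hx => (symmDiff C C').le_max' x hx⟩

lemma setLt_iff' (C C' : Finset ℕ) :
    ((∃ h, isMaxOf (symmDiff C C') h ∧ Even h ∧ h ∈ C) ∨
      (∃ h, isMaxOf (symmDiff C C') h ∧ Odd h ∧ h ∈ C')) ↔ w C' < w C := by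
  constructor
  · rintro (⟨h, hmax, he, hc⟩ | ⟨h, hmax, ho, hc⟩)
    · exact (setLt_iff C C' h hmax).mp (Or.inl ⟨he, hc⟩)
    · exact (setLt_iff C C' h hmax).mp (Or.inr ⟨ho, hc⟩)
  · intro hlt
    have hne : C ≠ C' := by rintro rfl; exact lt_irrefl _ hlt
    obtain ⟨h, hmax⟩ := exists_max C C' hne
    rcases (setLt_iff C C' h hmax).mpr hlt with ⟨he, hc⟩ | ⟨ho, hc⟩
    · exact Or.inl ⟨h, hmax, he, hc⟩
    · exact Or.inr ⟨h, hmax, ho, hc⟩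

lemma w_inj {C C' : Finset ℕ} (hw : w C = w C') : C = C' := by
  by_contra hne
  obtain ⟨h, hmax⟩ := exists_max C C' hne
  have hmax' : isMaxOf (symmDiff C' C) h := by rwa [symmDiff_comm]
  rcases Finset.mem_symmDiff.mp hmax.1 with ⟨h1, h2⟩ | ⟨h1, h2⟩ <;>
    rcases Nat.even_or_odd h with hp | hp
  · exact absurd ((setLt_iff C C' h hmax).mp (Or.inl ⟨hp, h1⟩)) (by omega)
  · exact absurd ((setLt_iff C' C h hmax').mp (Or.inr ⟨hp, h1⟩)) (by omega)
  · exact absurd ((setLt_iff C' C h hmax').mp (Or.inl ⟨hp, h1⟩)) (by omega)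
  · exact absurd ((setLt_iff C C' h hmax).mp (Or.inr ⟨hp, h1⟩)) (by omega)

/-- parity rank of a colour -/
def pr (c : ℕ) : ℤ := if Even c then (c:ℤ) else -(c:ℤ)

lemma parityLt_iff (a b : ℕ) : parityLt a b ↔ pr a < pr b := by
  unfold parityLt pr
  rcases Nat.even_or_odd a with ha | ha <;> rcases Nat.even_or_odd b with hb | hb <;>
    simp [ha, hb, Nat.not_odd_iff_even.mpr, Nat.not_even_iff_odd.mpr] <;>
  · have := Nat.odd_iff.mp (by assumption)
    omega

lemma pr_inj {a b : ℕ} (h : pr a = pr b) : a = b := by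
  unfold pr at h
  rcases Nat.even_or_odd a with ha | ha <;> rcases Nat.even_or_odd b with hb | hb <;>
    simp [ha, hb, Nat.not_odd_iff_even.mpr, Nat.not_even_iff_odd.mpr] at h <;>
    first
      | omega
      | (have := Nat.odd_iff.mp ha; omega)
      | (have := Nat.odd_iff.mp hb; omega)

/-- index rank -/
def gr (c d : ℕ) : ℤ := if Even c then -(d:ℤ) else (d:ℤ)

lemma gr_lt_iff (c d d' : ℕ) :
    gr c d' < gr c d ↔ (Even c ∧ d < d') ∨ (Odd c ∧ d' < d) := by
  unfold gr
  rcases Nat.even_or_odd c with h | h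
  · rw [if_pos h, if_pos h]
    constructor
    · intro hh; exact Or.inl ⟨h, by omega⟩
    · rintro (⟨_, hh⟩ | ⟨ho, _⟩)
      · omega
      · exact absurd h (Nat.not_even_iff_odd.mpr ho)
  · rw [if_neg (Nat.not_even_iff_odd.mpr h), if_neg (Nat.not_even_iff_odd.mpr h)]
    constructor
    · intro hh; exact Or.inr ⟨h, by omega⟩
    · rintro (⟨he, _⟩ | ⟨_, hh⟩)
      · exact absurd he (Nat.not_even_iff_odd.mpr h)
      · omega

lemma gr_inj {c d d' : ℕ} (h : gr c d' = gr c d) : d' = d := by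
  unfold gr at h
  split at h <;> omega

/-- encoding into a lexicographic product -/
def F (t : ℕ × Finset ℕ × ℕ) : Lex (ℤ × Lex (ℤ × ℤ)) :=
  toLex (pr t.1, toLex (w t.2.1, gr t.1 t.2.2))

lemma master (t' t : ℕ × Finset ℕ × ℕ) : tripLt t' t ↔ F t' < F t := by
  obtain ⟨c', C', d'⟩ := t'
  obtain ⟨c, C, d⟩ := t
  show (parityLt c' c ∨ _ ∨ _ ∨ _ ∨ _) ↔ _
  unfold F
  rw [Prod.Lex.lt_iff, Prod.Lex.lt_iff]
  simp only
  constructor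
  · rintro (hp | ⟨rfl, h, hmax, he, hc⟩ | ⟨rfl, h, hmax, ho, hc⟩ | ⟨rfl, rfl, hev, hlt⟩ |
      ⟨rfl, rfl, hod, hlt⟩)
    · exact Or.inl ((parityLt_iff _ _).mp hp)
    · exact Or.inr ⟨rfl, Or.inl ((setLt_iff' C C').mp (Or.inl ⟨h, hmax, he, hc⟩))⟩
    · exact Or.inr ⟨rfl, Or.inl ((setLt_iff' C C').mp (Or.inr ⟨h, hmax, ho, hc⟩))⟩
    · exact Or.inr ⟨rfl, Or.inr ⟨rfl, (gr_lt_iff _ _ _).mpr (Or.inl ⟨hev, hlt⟩)⟩⟩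
    · exact Or.inr ⟨rfl, Or.inr ⟨rfl, (gr_lt_iff _ _ _).mpr (Or.inr ⟨hod, hlt⟩)⟩⟩
  · rintro (hp | ⟨hpr, hrest⟩)
    · exact Or.inl ((parityLt_iff _ _).mpr hp)
    · obtain rfl : c' = c := pr_inj hpr
      rcases hrest with hw | ⟨hw, hg⟩
      · rcases (setLt_iff' C C').mpr hw with ⟨h, hmax, he, hc⟩ | ⟨h, hmax, ho, hc⟩
        · exact Or.inr (Or.inl ⟨rfl, h, hmax, he, hc⟩)
        · exact Or.inr (Or.inr (Or.inl ⟨rfl, h, hmax, ho, hc⟩))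
      · obtain rfl : C' = C := w_inj hw
        rcases (gr_lt_iff _ _ _).mp hg with ⟨hev, hlt⟩ | ⟨hod, hlt⟩
        · exact Or.inr (Or.inr (Or.inr (Or.inl ⟨rfl, rfl, hev, hlt⟩)))
        · exact Or.inr (Or.inr (Or.inr (Or.inr ⟨rfl, rfl, hod, hlt⟩)))

lemma F_inj {t' t : ℕ × Finset ℕ × ℕ} (h : F t' = F t) : t' = t := by
  obtain ⟨c', C', d'⟩ := t'
  obtain ⟨c, C, d⟩ := t
  unfold F at h
  simp only [toLex_inj, Prod.mk.injEq] at h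
  obtain ⟨h1, h2, h3⟩ := h
  obtain rfl : c' = c := pr_inj h1
  obtain rfl : C' = C := w_inj h2
  obtain rfl : d' = d := gr_inj h3
  rfl

/-- On valid triples the preference order is a strict linear order:
irreflexive, transitive and total. -/
theorem tripLt_strict_linear_order :
    (∀ t : ℕ × Finset ℕ × ℕ, validTriple t → ¬ tripLt t t) ∧
    (∀ t₁ t₂ t₃ : ℕ × Finset ℕ × ℕ, validTriple t₁ → validTriple t₂ →
      validTriple t₃ → tripLt t₁ t₂ → tripLt t₂ t₃ → tripLt t₁ t₃) ∧
    (∀ t₁ t₂ : ℕ × Finset ℕ × ℕ, validTriple t₁ → validTriple t₂ →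
      tripLt t₁ t₂ ∨ t₁ = t₂ ∨ tripLt t₂ t₁) := by
  refine ⟨?_, ?_, ?_⟩
  · intro t _ h
    exact lt_irrefl _ ((master t t).mp h)
  · intro t₁ t₂ t₃ _ _ _ h12 h23
    exact (master t₁ t₃).mpr (lt_trans ((master t₁ t₂).mp h12) ((master t₂ t₃).mp h23))
  · intro t₁ t₂ _ _
    rcases lt_trichotomy (F t₁) (F t₂) with h | h | h
    · exact Or.inl ((master t₁ t₂).mpr h)
    · exact Or.inr (Or.inl (F_inj h))
    · exact Or.inr (Or.inr ((master t₂ t₁).mpr h))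
end

section
/- If the successor function induced by a positional strategy pair yields a play entering a cycle of length p at index i, then the limsup of the colours along the play equals the maximum colour occurring on the cycle {π_i, π_{i+1}, …, π_{i+p-1}}. -/
open Filter

/-- If the play induced by a successor function enters a cycle of length `p`
at index `i`, then the `limsup` of the colours along the play equals the
maximum colour occurring on the cycle. -/
theorem limsup_eq_max_colour_on_cycle {V : Type*} [Fintype V] (s : V → V)
    (φ : V → ℕ) (v : V) (i p : ℕ) (hp : 1 ≤ p) (hcyc : s^[i + p] v = s^[i] v) :
    limsup (fun k => φ (s^[k] v)) atTop =
      (Finset.range p).sup (fun r => φ (s^[i + r] v)) := by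
  set M := (Finset.range p).sup (fun r => φ (s^[i + r] v)) with hM
  have step : ∀ k, s^[i + p + k] v = s^[i + k] v := by
    intro k
    have h1 : i + p + k = k + (i + p) := by ring
    have h2 : i + k = k + i := by ring
    rw [h1, h2, Function.iterate_add_apply, hcyc, ← Function.iterate_add_apply]
  have key : ∀ n r, s^[i + n * p + r] v = s^[i + r] v := by
    intro n
    induction n with
    | zero => intro r; simp
    | succ n ih =>
      intro r
      have h1 : i + (n + 1) * p + r = i + p + (n * p + r) := by ring
      have h2 : i + n * p + r = i + (n * p + r) := by ring
      rw [h1, step (n * p + r), ← h2, ih r]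
  -- eventual upper bound
  have hub : ∀ᶠ k in atTop, φ (s^[k] v) ≤ M := by
    filter_upwards [eventually_ge_atTop i] with k hk
    have hkdecomp : k = i + ((k - i) / p) * p + (k - i) % p := by
      have h : ((k - i) / p) * p + (k - i) % p = k - i := by
        rw [mul_comm]; exact Nat.div_add_mod _ _
      omega
    rw [hkdecomp, key]
    exact Finset.le_sup (f := fun r => φ (s^[i + r] v))
      (Finset.mem_range.mpr (Nat.mod_lt _ hp))
  -- M attained frequently
  obtain ⟨r0, hr0mem, hr0⟩ :=
    Finset.exists_mem_eq_sup (Finset.range p) ⟨0, Finset.mem_range.mpr hp⟩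
      (fun r => φ (s^[i + r] v))
  have hfreq : ∃ᶠ k in atTop, M ≤ φ (s^[k] v) := by
    rw [frequently_atTop]
    intro a
    refine ⟨i + a * p + r0, ?_, ?_⟩
    · have : a ≤ a * p := Nat.le_mul_of_pos_right a hp
      omega
    · rw [key a r0, ← hr0]
  have hbdd : IsBoundedUnder (· ≤ ·) atTop (fun k => φ (s^[k] v)) :=
    ⟨M, hub⟩
  have hcobdd : IsCoboundedUnder (· ≤ ·) atTop (fun k => φ (s^[k] v)) :=
    Filter.isCoboundedUnder_le_of_le atTop (fun k => Nat.zero_le _)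
  exact le_antisymm (Filter.limsup_le_of_le hcobdd hub)
    (Filter.le_limsup_of_frequently_le hfreq hbdd)
end
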